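/- Let W : Σ → M_d(ℝ) and b : Σ → ℝ^d, and define the ISAN recurrence c_0 = 0, c_t = W(x_t)·c_{t-1} + b(x_t). Then there exist d WFSAs G_1,…,G_d over the real semiring, each with 2d states, such that for every input string x and every t, the i-th coordinate of c_t equals G_i⟦x_{:t}⟧. -/
import Mathlib


open Matrix

/-- Score assigned by a WFSA with state set `Q`, transition weights `τ`,
initial weights `lam`, and final weights `ρ` (all over the real semiring,
possibly with multiple initial states) to the prefix `x_1 … x_t`: the sum
over all paths of the product of the initial weight, the transition weights,
and the final weight. -/
noncomputable def wfsaScore {A Q : Type*} [Fintype Q] (τ : Q → Q → A → ℝ)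
    (lam ρ : Q → ℝ) (x : ℕ → A) (t : ℕ) : ℝ :=
  ∑ p : Fin (t + 1) → Q,
    lam (p 0) * (∏ i : Fin t, τ (p i.castSucc) (p i.succ) (x (i.1 + 1))) *
      ρ (p (Fin.last t))

/-- Forward weight vector of a WFSA after reading `x_1 … x_t`. -/
noncomputable def wfsaFwd {A Q : Type*} [Fintype Q] (τ : Q → Q → A → ℝ)
    (lam : Q → ℝ) (x : ℕ → A) : ℕ → Q → ℝ
  | 0 => lam
  | t + 1 => fun q' => ∑ q, wfsaFwd τ lam x t q * τ q q' (x (t + 1))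

/-- The equivalence `(Fin n → Q) × Q ≃ (Fin (n+1) → Q)` given by `Fin.snoc`. -/
def snocEquiv (n : ℕ) (Q : Type*) : ((Fin n → Q) × Q) ≃ (Fin (n + 1) → Q) where
  toFun fq := Fin.snoc fq.1 fq.2
  invFun p := (fun i => p i.castSucc, p (Fin.last n))
  left_inv := by
    rintro ⟨f, q⟩
    simp
  right_inv := by
    intro p
    exact Fin.snoc_init_self p

lemma wfsaScore_eq_fwd {A Q : Type*} [Fintype Q] (τ : Q → Q → A → ℝ)
    (lam : Q → ℝ) (x : ℕ → A) (t : ℕ) :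
    ∀ ρ : Q → ℝ, wfsaScore τ lam ρ x t = ∑ q, wfsaFwd τ lam x t q * ρ q := by
  induction t with
  | zero =>
    intro ρ
    unfold wfsaScore
    rw [← ((Equiv.funUnique (Fin 1) Q).symm.sum_comp
      (fun p : Fin 1 → Q => lam (p 0) *
        (∏ i : Fin 0, τ (p i.castSucc) (p i.succ) (x (i.1 + 1))) * ρ (p (Fin.last 0))))]
    simp [wfsaFwd]
  | succ t ih =>
    intro ρ
    unfold wfsaScore
    rw [← ((snocEquiv (t + 1) Q).sum_comp
      (fun p : Fin (t + 2) → Q => lam (p 0) *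
        (∏ i : Fin (t + 1), τ (p i.castSucc) (p i.succ) (x (i.1 + 1))) *
          ρ (p (Fin.last (t + 1)))))]
    rw [Fintype.sum_prod_type]
    have key : ∀ (f : Fin (t + 1) → Q) (q : Q),
        (fun p : Fin (t + 2) → Q => lam (p 0) *
          (∏ i : Fin (t + 1), τ (p i.castSucc) (p i.succ) (x (i.1 + 1))) *
            ρ (p (Fin.last (t + 1)))) (snocEquiv (t + 1) Q (f, q))
        = lam (f 0) *
            (∏ i : Fin t, τ (f i.castSucc) (f i.succ) (x (i.1 + 1))) *
              (τ (f (Fin.last t)) q (x (t + 1))) * ρ q := by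
      intro f q
      have hsnoc : (snocEquiv (t + 1) Q) (f, q) = Fin.snoc f q := rfl
      rw [hsnoc]
      simp only
      rw [Fin.prod_univ_castSucc]
      have h0 : (Fin.snoc f q : Fin (t + 2) → Q) 0 = f 0 := by
        rw [show (0 : Fin (t + 2)) = Fin.castSucc 0 by rfl, Fin.snoc_castSucc]
      have hlast : (Fin.snoc f q : Fin (t + 2) → Q) (Fin.last (t + 1)) = q :=
        by simp
      rw [h0, hlast]
      have hterm : ∀ j : Fin t,
          τ ((Fin.snoc f q : Fin (t + 2) → Q) j.castSucc.castSucc)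
              ((Fin.snoc f q : Fin (t + 2) → Q) j.castSucc.succ)
              (x (j.castSucc.1 + 1))
          = τ (f j.castSucc) (f j.succ) (x (j.1 + 1)) := by
        intro j
        rw [Fin.succ_castSucc, Fin.snoc_castSucc, Fin.snoc_castSucc, Fin.coe_castSucc]
      rw [Finset.prod_congr rfl (fun j _ => hterm j)]
      have hlastterm : τ ((Fin.snoc f q : Fin (t + 2) → Q) (Fin.last t).castSucc)
          ((Fin.snoc f q : Fin (t + 2) → Q) (Fin.last t).succ) (x ((Fin.last t).1 + 1))
          = τ (f (Fin.last t)) q (x (t + 1)) := by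
        rw [Fin.succ_last, Fin.snoc_castSucc, Fin.snoc_last, Fin.val_last]
      rw [hlastterm]
      ring
    rw [Finset.sum_comm]
    have step : ∀ q : Q,
        (∑ f : Fin (t + 1) → Q,
          (fun p : Fin (t + 2) → Q => lam (p 0) *
            (∏ i : Fin (t + 1), τ (p i.castSucc) (p i.succ) (x (i.1 + 1))) *
              ρ (p (Fin.last (t + 1)))) (snocEquiv (t + 1) Q (f, q)))
        = wfsaFwd τ lam x (t + 1) q * ρ q := by
      intro q
      rw [Finset.sum_congr rfl (fun f _ => key f q)]
      rw [← Finset.sum_mul]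
      congr 1
      have h := ih (fun r => τ r q (x (t + 1)))
      unfold wfsaScore at h
      exact h
    rw [Finset.sum_congr rfl (fun q _ => step q)]

/-- Encoding of two copies of the state indices into `Fin (2 * d)`. -/
def isanEquiv (d : ℕ) : Fin d ⊕ Fin d ≃ Fin (2 * d) :=
  finSumFinEquiv.trans (finCongr (two_mul d).symm)

/-- Transition weights of the ISAN WFSA, on the sum type. -/
def isanTau {A : Type*} (d : ℕ) (W : A → Matrix (Fin d) (Fin d) ℝ)
    (b : A → Fin d → ℝ) : (Fin d ⊕ Fin d) → (Fin d ⊕ Fin d) → A → ℝ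
  | Sum.inl j, Sum.inl k, a => W a k j
  | Sum.inl _, Sum.inr _, _ => 0
  | Sum.inr j, Sum.inl k, a => if j = k then b a k else 0
  | Sum.inr j, Sum.inr k, _ => if j = k then 1 else 0

/-- Initial weights of the ISAN WFSA, on the sum type. -/
def isanLam (d : ℕ) : (Fin d ⊕ Fin d) → ℝ
  | Sum.inl _ => 0
  | Sum.inr _ => 1

/-- Final weights of the `i`-th ISAN WFSA, on the sum type. -/
def isanRho (d : ℕ) (i : Fin d) : (Fin d ⊕ Fin d) → ℝ
  | Sum.inl j => if j = i then 1 else 0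
  | Sum.inr _ => 0

/-- Proposition 4: the (non-elementwise) ISAN recurrence
`c_0 = 0`, `c_t = W(x_t)·c_{t-1} + b(x_t)` is rational: there exist `d` WFSAs
over the real semiring, each with `2d` states, such that for every input
sequence `x` and every `t`, the `i`-th coordinate of `c_t` equals the score
assigned by the `i`-th WFSA to the prefix `x_1 … x_t`. -/
theorem stmt9 {A : Type*} [Fintype A] (d : ℕ)
    (W : A → Matrix (Fin d) (Fin d) ℝ) (b : A → Fin d → ℝ) :
    ∃ (τ : Fin d → Fin (2 * d) → Fin (2 * d) → A → ℝ)
      (lam ρ : Fin d → Fin (2 * d) → ℝ),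
      ∀ (x : ℕ → A) (c : ℕ → Fin d → ℝ),
        c 0 = 0 →
        (∀ t, 1 ≤ t → c t = W (x t) *ᵥ c (t - 1) + b (x t)) →
        ∀ (t : ℕ) (i : Fin d), c t i = wfsaScore (τ i) (lam i) (ρ i) x t := by
  set e := isanEquiv d with he
  refine ⟨fun _ q q' a => isanTau d W b (e.symm q) (e.symm q') a,
    fun _ q => isanLam d (e.symm q), fun i q => isanRho d i (e.symm q), ?_⟩
  intro x c hc0 hc t i
  set τ1 : Fin (2 * d) → Fin (2 * d) → A → ℝ :=
    fun q q' a => isanTau d W b (e.symm q) (e.symm q') a with hτ1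
  set lam1 : Fin (2 * d) → ℝ := fun q => isanLam d (e.symm q) with hlam1
  -- the forward vector equals (c t, 1) in the sum coordinates
  have hfwd : ∀ t : ℕ, ∀ s : Fin d ⊕ Fin d,
      wfsaFwd τ1 lam1 x t (e s) =
        (match s with | Sum.inl j => c t j | Sum.inr _ => 1) := by
    intro t
    induction t with
    | zero =>
      intro s
      show lam1 (e s) = _
      rw [hlam1]
      simp only [Equiv.symm_apply_apply]
      cases s with
      | inl j => simp [isanLam, hc0]
      | inr j => rfl
    | succ t ih =>
      intro s
      show (∑ q, wfsaFwd τ1 lam1 x t q * τ1 q (e s) (x (t + 1))) = _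
      rw [← (e.sum_comp (fun q => wfsaFwd τ1 lam1 x t q * τ1 q (e s) (x (t + 1))))]
      have hterm : ∀ r : Fin d ⊕ Fin d,
          wfsaFwd τ1 lam1 x t (e r) * τ1 (e r) (e s) (x (t + 1))
          = (match r with | Sum.inl j => c t j | Sum.inr _ => 1) *
              isanTau d W b r s (x (t + 1)) := by
        intro r
        rw [ih r, hτ1]
        simp only [Equiv.symm_apply_apply]
      rw [Fintype.sum_sum_type]
      simp only [hterm]
      cases s with
      | inl j =>
        have h1 : ∀ k : Fin d, isanTau d W b (Sum.inl k) (Sum.inl j) (x (t + 1)) =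
            W (x (t + 1)) j k := fun k => rfl
        have h2 : ∀ k : Fin d, isanTau d W b (Sum.inr k) (Sum.inl j) (x (t + 1)) =
            if k = j then b (x (t + 1)) j else 0 := fun k => rfl
        simp only [h1, h2]
        have hrec := hc (t + 1) (by omega)
        simp only [Nat.add_sub_cancel] at hrec
        rw [hrec]
        simp [Matrix.mulVec, dotProduct, mul_comm]
      | inr j =>
        have h1 : ∀ k : Fin d, isanTau d W b (Sum.inl k) (Sum.inr j) (x (t + 1)) = 0 :=
          fun k => rfl
        have h2 : ∀ k : Fin d, isanTau d W b (Sum.inr k) (Sum.inr j) (x (t + 1)) =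
            if k = j then 1 else 0 := fun k => rfl
        simp only [h1, h2, mul_zero, mul_ite, mul_one, Finset.sum_const_zero]
        simp
  rw [wfsaScore_eq_fwd]
  rw [← (e.sum_comp (fun q => wfsaFwd τ1 lam1 x t q * isanRho d i (e.symm q)))]
  rw [Fintype.sum_sum_type]
  simp only [hfwd, Equiv.symm_apply_apply]
  have h1 : ∀ j : Fin d, isanRho d i (Sum.inl j) = if j = i then 1 else 0 := fun j => rfl
  have h2 : ∀ j : Fin d, isanRho d i (Sum.inr j) = 0 := fun j => rfl
  simp only [h1, h2, mul_zero, mul_ite, mul_one, Finset.sum_const_zero, add_zero]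
  simp
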